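/- On an independence hypergraph L with vertices from a finite totally ordered set V, the weighted coboundary operator ∂^n(w) = Σ_{v∈V} w(v)·dv satisfies ∂^{n+1}(w) ∘ ∂^n(w) = 0, where ∂^n(w){v_0,…,v_n} = Σ_{v∈V} sgn(v)·w(v)·({v_0,…,v_n} ∪ {v}), with sgn(v) = 0 if v ∈ {v_0,…,v_n}, sgn(v) = (−1)^i if v_{i−1} < v < v_i, sgn(v) = (−1)^{n+1} if v_n < v, and sgn(v) = 1 if v < v_0. -/

import Mathlib

/-- `R_n(H)`: the free `R`-module on the `n`-hyperedges of `H` (hyperedges with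
`n+1` vertices), as a submodule of the free module on all finite subsets of `V`. -/
noncomputable def chains (R : Type*) [CommRing R] {V : Type*}
    (H : Set (Finset V)) (n : ℕ) : Submodule R (Finset V →₀ R) :=
  Submodule.span R {x | ∃ σ ∈ H, σ.card = n + 1 ∧ x = Finsupp.single σ 1}

/-- The `w`-weighted coboundary operator `∂^n(w)`, sending `{v_0,…,v_n}` to
`Σ_{v∈V} sgn(v)·w(v)·({v_0,…,v_n} ∪ {v})`, where `sgn(v) = 0` if `v` already
occurs and otherwise `sgn(v) = (−1)^i` with `i` the number of vertices of the
hyperedge smaller than `v`. -/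
noncomputable def wcb (R : Type*) [CommRing R] {V : Type*} [LinearOrder V] [Fintype V]
    (w : V → R) : (Finset V →₀ R) →ₗ[R] (Finset V →₀ R) :=
  Finsupp.lsum R fun σ => LinearMap.toSpanSingleton R _
    (∑ v : V, if v ∈ σ then 0
      else (((-1 : R) ^ ((σ.filter (· < v)).card)) * w v) •
        Finsupp.single (insert v σ) (1 : R))

/-- A hypergraph is an independence hypergraph if all its hyperedges are
non-empty and every superset (within `V`) of a hyperedge is a hyperedge. -/
def IsIndependenceHypergraph {V : Type*} (L : Set (Finset V)) : Prop :=
  (∀ σ ∈ L, σ.Nonempty) ∧ ∀ σ ∈ L, ∀ τ : Finset V, σ ⊆ τ → τ ∈ L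

/-!
Write `∂(w) = Σ_v w(v) d_v`, where `d_v` inserts `v` with the sign `(-1)^#{u ∈ σ | u < v}`.
Inserting `v` and then `u` produces the same hyperedge as inserting `u` and then `v`, but
exactly one of the two orders shifts the position of the second vertex by one, so
`d_u d_v = -d_v d_u`; and `d_v d_v = 0` since `v` cannot be inserted twice. Hence the terms
of `∂(w)∂(w) = Σ_{u,v} w(u) w(v) d_u d_v` cancel in pairs.
-/

open Finset

theorem Finset.sum_sum_eq_zero_of_antisymm {ι M : Type*} [AddCommGroup M] (s : Finset ι)
    (f : ι → ι → M) (hf : ∀ i j, f i j = -f j i) (hdiag : ∀ i, f i i = 0) :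
    ∑ i ∈ s, ∑ j ∈ s, f i j = 0 := by
  rw [← sum_product']
  refine sum_involution (fun p _ => p.swap) (fun p _ => by rw [hf]; exact neg_add_cancel _)
    (fun p _ hp hswap => hp ?_) (fun p hp => mem_product.2 (mem_product.1 hp).symm)
    (fun p _ => p.swap_swap)
  obtain ⟨i, j⟩ := p
  obtain rfl : j = i := congrArg Prod.fst hswap
  exact hdiag j

section WeightedCoboundary

variable {R : Type*} [CommRing R] {V : Type*} [LinearOrder V]

/-- The coefficient `sgn(v)·w(v)` of `insert v σ` in `∂(w) σ`. -/
def insertCoeff (w : V → R) (σ : Finset V) (v : V) : R :=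
  if v ∈ σ then 0 else (-1) ^ #{u ∈ σ | u < v} * w v

theorem card_filter_lt_insert {σ : Finset V} {u v : V} (hv : v ∉ σ) :
    #{x ∈ insert v σ | x < u} = #{x ∈ σ | x < u} + if v < u then 1 else 0 := by
  rw [filter_insert]
  split_ifs
  · exact card_insert_of_notMem (by simp [hv])
  · rfl

theorem insertCoeff_insert_self (w : V → R) (σ : Finset V) (v : V) :
    insertCoeff w (insert v σ) v = 0 :=
  if_pos (mem_insert_self v σ)

theorem insertCoeff_mul_insertCoeff_insert (w : V → R) (σ : Finset V) (u v : V) :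
    insertCoeff w σ v * insertCoeff w (insert v σ) u =
      -(insertCoeff w σ u * insertCoeff w (insert u σ) v) := by
  by_cases hv : v ∈ σ
  · simp [insertCoeff, hv]
  by_cases hu : u ∈ σ
  · simp [insertCoeff, hu]
  rcases eq_or_ne u v with rfl | hne
  · simp [insertCoeff]
  simp only [insertCoeff, hu, hv, mem_insert, hne, hne.symm, or_self, if_false,
    card_filter_lt_insert hu, card_filter_lt_insert hv]
  rcases hne.lt_or_gt with huv | huv <;> simp only [huv, huv.not_gt, if_true, if_false] <;> ring

variable [Fintype V]

theorem wcb_single_one (w : V → R) (σ : Finset V) :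
    wcb R w (Finsupp.single σ 1) = ∑ v, insertCoeff w σ v • Finsupp.single (insert v σ) 1 := by
  simp [wcb, insertCoeff, ite_smul]

theorem wcb_wcb_single_one (w : V → R) (σ : Finset V) :
    wcb R w (wcb R w (Finsupp.single σ 1)) = 0 := calc
  wcb R w (wcb R w (Finsupp.single σ 1)) =
      ∑ v, ∑ u, (insertCoeff w σ v * insertCoeff w (insert v σ) u) •
        Finsupp.single (insert u (insert v σ)) 1 := by
    simp only [wcb_single_one, map_sum, map_smul, smul_sum, smul_smul]
  _ = 0 := sum_sum_eq_zero_of_antisymm _ _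
    (fun v u => by rw [insertCoeff_mul_insertCoeff_insert, neg_smul, insert_comm])
    (fun v => by rw [insertCoeff_insert_self, mul_zero, zero_smul])

theorem wcb_comp_wcb (w : V → R) : wcb R w ∘ₗ wcb R w = 0 :=
  Finsupp.lhom_ext' fun σ => LinearMap.ext_ring (wcb_wcb_single_one w σ)

end WeightedCoboundary

theorem wcb_wcb_general (R : Type*) [CommRing R] {V : Type*} [LinearOrder V] [Fintype V]
    (w : V → R) (L : Set (Finset V)) :
    ∀ (n : ℕ) (x : Finset V →₀ R), x ∈ chains R L n → wcb R w (wcb R w x) = 0 :=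
  fun _ x _ => LinearMap.congr_fun (wcb_comp_wcb w) x

/-- On an independence hypergraph `L` with vertices from a finite totally
ordered set `V`, the weighted coboundary operator `∂^n(w) = Σ_{v∈V} w(v)·dv`
satisfies `∂^{n+1}(w) ∘ ∂^n(w) = 0`. -/
theorem wcb_wcb (R : Type*) [CommRing R] {V : Type*} [LinearOrder V] [Fintype V]
    (w : V → R) (L : Set (Finset V)) (hL : IsIndependenceHypergraph L) :
    ∀ (n : ℕ) (x : Finset V →₀ R), x ∈ chains R L n → wcb R w (wcb R w x) = 0 :=
  wcb_wcb_general R w L
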